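/- Fix n ≥ 1, Δ > 0, and a measurable estimator θ̂ : ℝⁿ → ℝ. Let P₊ be the n-fold product of the Gaussian measure N(Δ,1) on ℝ and P₋ the n-fold product of N(−Δ,1), and define the bounded estimation losses L₊(y) = min(|θ̂(y) − Δ|, 2Δ) and L₋(y) = min(|θ̂(y) + Δ|, 2Δ) for y ∈ ℝⁿ. Then for every α ∈ [0,1): inf_{t ∈ ℝ} { t + (1/(1−α))·(½∫(L₊−t)₊ dP₊ + ½∫(L₋−t)₊ dP₋) } ≥ 2Δ·Ψ_α(2√n·Δ). -/

import Mathlib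

/-!
Le Cam's two-point method. Since `L₊ + L₋ ≥ 2Δ` pointwise, a test `u` with values in `[0, 1]`
shows that at every threshold `t` the averaged excess `½ 𝔼₊ (L₊ - t)₊ + ½ 𝔼₋ (L₋ - t)₊` dominates
`𝔼 (X - t)₊` for the two-point law `X = Δ` with probability `b = (1 - TV(P₊, P₋))₊` and `X = 0`
otherwise. Hence the CVaR is at least that of `X`, namely `Δ min 1 (b / (1 - α))`, and this
dominates `2Δ Ψ_α(2√n Δ)` as soon as `TV ≤ √n Δ`.

The total variation is controlled by the Bhattacharyya coefficient `B = ∫ √(p q)`: writing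
`|q - p| = |√q - √p| (√q + √p)` and using AM-GM gives `∫ |q - p| ≤ (1 - B) / ε + ε (1 + B)`,
and for the two Gaussian products `B = exp (-n Δ² / 2) ≥ 1 - n Δ² / 2`.
-/

open MeasureTheory ProbabilityTheory

/-- The function `Ψ_α` from the scalar minimization lemma. -/
noncomputable def Psi (α ρ : ℝ) : ℝ :=
  if α = 0 then (max (1 - ρ) 0) ^ 2 / 2
  else if ρ ≤ α then 1 / 2 - ρ ^ 2 / (2 * α)
  else if ρ ≤ 1 then (1 - ρ) ^ 2 / (2 * (1 - α))
  else 0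

open Finset
open scoped ENNReal NNReal

namespace MeasureTheory

section Product

variable {ι E : Type*} [Fintype ι] [MeasurableSpace E]

theorem lintegral_fin_nat_prod_eq_prod {n : ℕ} {μ : Fin n → Measure E} [∀ i, SigmaFinite (μ i)]
    (f : Fin n → E → ℝ≥0∞) (hf : ∀ i, Measurable (f i)) :
    ∫⁻ x : Fin n → E, ∏ i, f i (x i) ∂(Measure.pi μ) = ∏ i, ∫⁻ x, f i x ∂(μ i) := by
  induction n with
  | zero => simp
  | succ n ih =>
      calc
        _ = ∫⁻ x : E × (Fin n → E), f 0 x.1 * ∏ i : Fin n, f i.succ (x.2 i)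
            ∂((μ 0).prod (Measure.pi fun i ↦ μ i.succ)) := by
          rw [← ((measurePreserving_piFinSuccAbove μ 0).symm).lintegral_comp_emb
            (MeasurableEquiv.measurableEmbedding _)]
          simp_rw [MeasurableEquiv.piFinSuccAbove_symm_apply, Fin.insertNthEquiv,
            Fin.prod_univ_succ, Fin.insertNth_zero]
          simp [Fin.zero_succAbove]
        _ = (∫⁻ x, f 0 x ∂μ 0) * ∏ i : Fin n, ∫⁻ x, f i.succ x ∂(μ i.succ) := by
          rw [lintegral_prod_mul (f := f 0) (g := fun x : Fin n → E ↦ ∏ i, f i.succ (x i))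
            (hf 0).aemeasurable (Finset.measurable_prod _
              fun i _ ↦ (hf i.succ).comp (measurable_pi_apply i)).aemeasurable,
            ih (fun i ↦ f i.succ) fun i ↦ hf i.succ]
        _ = ∏ i, ∫⁻ x, f i x ∂(μ i) := by rw [Fin.prod_univ_succ]

theorem lintegral_fintype_prod_eq_prod {μ : ι → Measure E} [∀ i, SigmaFinite (μ i)]
    (f : ι → E → ℝ≥0∞) (hf : ∀ i, Measurable (f i)) :
    ∫⁻ x : ι → E, ∏ i, f i (x i) ∂(Measure.pi μ) = ∏ i, ∫⁻ x, f i x ∂(μ i) := by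
  let e := (Fintype.equivFin ι).symm
  rw [← (measurePreserving_piCongrLeft _ e).lintegral_comp_emb
    (MeasurableEquiv.measurableEmbedding _)]
  simp_rw [← e.prod_comp, MeasurableEquiv.coe_piCongrLeft, Equiv.piCongrLeft_apply_apply]
  exact lintegral_fin_nat_prod_eq_prod (fun i ↦ f (e i)) fun i ↦ hf (e i)

theorem Measure.pi_withDensity {μ : ι → Measure E} [∀ i, SigmaFinite (μ i)]
    (f : ι → E → ℝ≥0∞) (hf : ∀ i, Measurable (f i))
    [∀ i, SigmaFinite ((μ i).withDensity (f i))] :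
    Measure.pi (fun i ↦ (μ i).withDensity (f i))
      = (Measure.pi μ).withDensity fun x ↦ ∏ i, f i (x i) := by
  refine Measure.pi_eq (μ := fun i ↦ (μ i).withDensity (f i)) fun s hs ↦ ?_
  have hbox : (Set.univ.pi s).indicator (fun x ↦ ∏ i, f i (x i))
      = fun x ↦ ∏ i, (s i).indicator (f i) (x i) := by
    ext x
    classical
    simp only [Set.indicator_apply, Set.mem_univ_pi]
    rw [Finset.prod_ite_zero]
    simp
  rw [withDensity_apply _ (MeasurableSet.univ_pi hs),
    ← lintegral_indicator (MeasurableSet.univ_pi hs), hbox,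
    lintegral_fintype_prod_eq_prod _ fun i ↦ (hf i).indicator (hs i)]
  simp_rw [lintegral_indicator (hs _), withDensity_apply _ (hs _)]

end Product

section Hellinger

variable {Ω : Type*} [MeasurableSpace Ω] {μ : Measure Ω}

theorem abs_sq_sub_sq_le {a b ε : ℝ} (ha : 0 ≤ a) (hb : 0 ≤ b) (hε : 0 < ε) :
    |b ^ 2 - a ^ 2| ≤ (b - a) ^ 2 / (2 * ε) + ε * (b + a) ^ 2 / 2 := by
  rw [show b ^ 2 - a ^ 2 = (b - a) * (b + a) by ring, abs_mul, abs_of_nonneg (add_nonneg hb ha),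
    ← sq_abs (b - a), ← sub_nonneg]
  have hamgm : |b - a| ^ 2 / (2 * ε) + ε * (b + a) ^ 2 / 2 - |b - a| * (b + a)
      = (|b - a| - ε * (b + a)) ^ 2 / (2 * ε) := by
    field_simp
    ring
  rw [hamgm]
  positivity

theorem integral_abs_sub_le_div_add_mul {p q : Ω → ℝ} (hp : ∀ x, 0 ≤ p x) (hq : ∀ x, 0 ≤ q x)
    (hpi : Integrable p μ) (hqi : Integrable q μ) (hp1 : ∫ x, p x ∂μ = 1) (hq1 : ∫ x, q x ∂μ = 1)
    (hpq : Integrable (fun x ↦ √(p x * q x)) μ) {ε : ℝ} (hε : 0 < ε) :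
    ∫ x, |q x - p x| ∂μ
      ≤ (1 - ∫ x, √(p x * q x) ∂μ) / ε + ε * (1 + ∫ x, √(p x * q x) ∂μ) := by
  have hpt : ∀ x, |q x - p x|
      ≤ (1 / (2 * ε) + ε / 2) * (p x + q x) + (ε - 1 / ε) * √(p x * q x) := by
    intro x
    have h := abs_sq_sub_sq_le (Real.sqrt_nonneg (p x)) (Real.sqrt_nonneg (q x)) hε
    rw [Real.sq_sqrt (hp x), Real.sq_sqrt (hq x), sub_sq', add_sq', Real.sq_sqrt (hp x),
      Real.sq_sqrt (hq x), mul_assoc, ← Real.sqrt_mul (hq x), mul_comm (q x)] at h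
    refine h.trans_eq ?_
    field_simp
    ring
  have hsum : Integrable (fun x ↦ p x + q x) μ := hpi.add hqi
  calc ∫ x, |q x - p x| ∂μ
      ≤ ∫ x, (1 / (2 * ε) + ε / 2) * (p x + q x) + (ε - 1 / ε) * √(p x * q x) ∂μ :=
        integral_mono (hqi.sub hpi).abs ((hsum.const_mul _).add (hpq.const_mul _)) hpt
    _ = (1 / (2 * ε) + ε / 2) * 2 + (ε - 1 / ε) * ∫ x, √(p x * q x) ∂μ := by
        rw [integral_add (hsum.const_mul _) (hpq.const_mul _), integral_const_mul,
          integral_const_mul, integral_add hpi hqi, hp1, hq1, one_add_one_eq_two]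
    _ = _ := by
        field_simp
        ring

theorem integral_abs_sub_le_two_mul {p q : Ω → ℝ} (hp : ∀ x, 0 ≤ p x) (hq : ∀ x, 0 ≤ q x)
    (hpi : Integrable p μ) (hqi : Integrable q μ) (hp1 : ∫ x, p x ∂μ = 1) (hq1 : ∫ x, q x ∂μ = 1)
    (hpq : Integrable (fun x ↦ √(p x * q x)) μ) {s : ℝ} (hs : 0 ≤ s)
    (hB : 1 - s ^ 2 / 2 ≤ ∫ x, √(p x * q x) ∂μ) :
    ∫ x, |q x - p x| ∂μ ≤ 2 * s := by
  have hB1 : ∫ x, √(p x * q x) ∂μ ≤ 1 := by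
    have hsum : Integrable (fun x ↦ p x + q x) μ := hpi.add hqi
    have h := integral_mono hpq (hsum.div_const 2) fun x ↦ Real.sqrt_le_iff.mpr
      ⟨by linarith [hp x, hq x], by nlinarith [sq_nonneg (p x - q x)]⟩
    rwa [integral_div, integral_add hpi hqi, hp1, hq1, add_self_div_two] at h
  have hε := fun ε (hε : 0 < ε) ↦ integral_abs_sub_le_div_add_mul hp hq hpi hqi hp1 hq1 hpq hε
  rcases hs.eq_or_lt with rfl | hs
  · refine le_of_forall_pos_le_add fun ε hε' ↦ (hε (ε / 2) (by positivity)).trans ?_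
    have hB1' : ∫ x, √(p x * q x) ∂μ = 1 := by linarith
    rw [hB1']
    exact le_of_eq (by ring)
  · refine (hε (s / 2) (by positivity)).trans ?_
    have h1 : (1 - ∫ x, √(p x * q x) ∂μ) / (s / 2) ≤ s := by
      rw [div_le_iff₀ (by positivity)]
      nlinarith
    nlinarith

theorem integral_mul_le_half_integral_abs {D u : Ω → ℝ} (hD : Integrable D μ)
    (hD0 : ∫ x, D x ∂μ = 0) (hu : AEStronglyMeasurable u μ) (hu0 : ∀ x, 0 ≤ u x)
    (hu1 : ∀ x, u x ≤ 1) :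
    ∫ x, D x * u x ∂μ ≤ (∫ x, |D x| ∂μ) / 2 := by
  have hpt : ∀ x, D x * u x ≤ |D x| / 2 + D x / 2 := by
    intro x
    have h : |u x - 1 / 2| ≤ 1 / 2 := abs_le.mpr ⟨by linarith [hu0 x], by linarith [hu1 x]⟩
    nlinarith [neg_abs_le (D x), le_abs_self (D x), abs_mul (D x) (u x - 1 / 2),
      le_abs_self (D x * (u x - 1 / 2)), mul_le_mul_of_nonneg_left h (abs_nonneg (D x))]
  have hDu : Integrable (fun x ↦ D x * u x) μ :=
    hD.mul_bdd hu (ae_of_all _ fun x ↦ by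
      rw [Real.norm_eq_abs, abs_of_nonneg (hu0 x)]; exact hu1 x)
  calc ∫ x, D x * u x ∂μ ≤ ∫ x, |D x| / 2 + D x / 2 ∂μ :=
        integral_mono hDu (hD.abs.div_const 2 |>.add (hD.div_const 2)) hpt
    _ = (∫ x, |D x| ∂μ) / 2 := by
        rw [integral_add (hD.abs.div_const 2) (hD.div_const 2), integral_div, integral_div, hD0,
          zero_div, add_zero]

end Hellinger

end MeasureTheory

namespace ProbabilityTheory

section Gaussian

variable {ι : Type*} [Fintype ι]

theorem pi_gaussianReal_eq_withDensity (m : ℝ) {v : ℝ≥0} (hv : v ≠ 0) :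
    Measure.pi (fun _ : ι ↦ gaussianReal m v)
      = volume.withDensity fun y ↦ ∏ i, gaussianPDF m v (y i) := by
  simp_rw [gaussianReal_of_var_ne_zero _ hv, gaussianPDF_def]
  rw [Measure.pi_withDensity _ fun _ ↦ (measurable_gaussianPDFReal m v).ennreal_ofReal, volume_pi]

theorem integral_pi_gaussianReal (m : ℝ) {v : ℝ≥0} (hv : v ≠ 0) (u : (ι → ℝ) → ℝ) :
    ∫ y, u y ∂(Measure.pi fun _ : ι ↦ gaussianReal m v)
      = ∫ y, (∏ i, gaussianPDFReal m v (y i)) * u y := by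
  rw [pi_gaussianReal_eq_withDensity m hv, integral_withDensity_eq_integral_toReal_smul
    (by fun_prop)
    (ae_of_all _ fun _ ↦ ENNReal.prod_lt_top fun _ _ ↦ gaussianPDF_lt_top)]
  simp [ENNReal.toReal_prod, toReal_gaussianPDF]

theorem sqrt_gaussianPDFReal_mul_gaussianPDFReal (m₁ m₂ : ℝ) (v : ℝ≥0) (x : ℝ) :
    √(gaussianPDFReal m₁ v x * gaussianPDFReal m₂ v x)
      = Real.exp (-(m₁ - m₂) ^ 2 / (8 * v)) * gaussianPDFReal ((m₁ + m₂) / 2) v x := by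
  rw [← Real.sqrt_sq (mul_nonneg (Real.exp_nonneg _) (gaussianPDFReal_nonneg _ _ _))]
  congr 1
  simp only [gaussianPDFReal]
  have hexp : -(x - m₁) ^ 2 / (2 * v) + -(x - m₂) ^ 2 / (2 * v)
      = -(m₁ - m₂) ^ 2 / (8 * v) + -(x - (m₁ + m₂) / 2) ^ 2 / (2 * v)
        + (-(m₁ - m₂) ^ 2 / (8 * v) + -(x - (m₁ + m₂) / 2) ^ 2 / (2 * v)) := by
    ring
  rw [mul_mul_mul_comm, ← Real.exp_add, hexp, Real.exp_add, Real.exp_add]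
  ring

theorem integrable_prod_gaussianPDFReal (m : ℝ) (v : ℝ≥0) :
    Integrable fun y : ι → ℝ ↦ ∏ i, gaussianPDFReal m v (y i) := by
  rw [volume_pi]
  exact .fintype_prod fun _ ↦ integrable_gaussianPDFReal _ _

theorem integral_prod_gaussianPDFReal (m : ℝ) {v : ℝ≥0} (hv : v ≠ 0) :
    ∫ y : ι → ℝ, ∏ i, gaussianPDFReal m v (y i) = 1 := by
  rw [volume_pi, integral_fintype_prod_eq_pow, integral_gaussianPDFReal_eq_one _ hv, one_pow]

theorem sqrt_prod_gaussianPDFReal_mul_prod (m₁ m₂ : ℝ) (v : ℝ≥0) (y : ι → ℝ) :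
    √((∏ i, gaussianPDFReal m₁ v (y i)) * ∏ i, gaussianPDFReal m₂ v (y i))
      = Real.exp (-(m₁ - m₂) ^ 2 / (8 * v)) ^ Fintype.card ι
        * ∏ i, gaussianPDFReal ((m₁ + m₂) / 2) v (y i) := by
  rw [← prod_mul_distrib, Real.sqrt_prod _ fun i _ ↦
      mul_nonneg (gaussianPDFReal_nonneg _ _ _) (gaussianPDFReal_nonneg _ _ _),
    ← Finset.card_univ, ← prod_const, ← prod_mul_distrib]
  exact prod_congr rfl fun i _ ↦ sqrt_gaussianPDFReal_mul_gaussianPDFReal _ _ _ _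

theorem integral_pi_gaussianReal_sub_le {m₁ m₂ : ℝ} {v : ℝ≥0} (hv : v ≠ 0)
    {u : (ι → ℝ) → ℝ} (hu : Measurable u) (hu0 : ∀ y, 0 ≤ u y) (hu1 : ∀ y, u y ≤ 1) :
    ∫ y, u y ∂(Measure.pi fun _ : ι ↦ gaussianReal m₂ v)
        - ∫ y, u y ∂(Measure.pi fun _ : ι ↦ gaussianReal m₁ v)
      ≤ √(Fintype.card ι) * |m₁ - m₂| / (2 * √v) := by
  set p : (ι → ℝ) → ℝ := fun y ↦ ∏ i, gaussianPDFReal m₁ v (y i)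
  set q : (ι → ℝ) → ℝ := fun y ↦ ∏ i, gaussianPDFReal m₂ v (y i)
  set s := √(Fintype.card ι) * |m₁ - m₂| / (2 * √v)
  have hpi : Integrable p := integrable_prod_gaussianPDFReal m₁ v
  have hqi : Integrable q := integrable_prod_gaussianPDFReal m₂ v
  have hpq : Integrable fun y ↦ √(p y * q y) := by
    simp_rw [p, q, sqrt_prod_gaussianPDFReal_mul_prod]
    exact (integrable_prod_gaussianPDFReal _ v).const_mul _
  have hB : 1 - s ^ 2 / 2 ≤ ∫ y, √(p y * q y) := by
    simp_rw [p, q, sqrt_prod_gaussianPDFReal_mul_prod]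
    rw [integral_const_mul, integral_prod_gaussianPDFReal _ hv, mul_one, ← Real.exp_nat_mul]
    have hs2 : s ^ 2 / 2 = -(Fintype.card ι * (-(m₁ - m₂) ^ 2 / (8 * v))) := by
      simp only [s]
      rw [div_pow, mul_pow, mul_pow, Real.sq_sqrt (Nat.cast_nonneg _), sq_abs,
        Real.sq_sqrt v.coe_nonneg]
      ring
    linarith [Real.add_one_le_exp (Fintype.card ι * (-(m₁ - m₂) ^ 2 / (8 * v)))]
  have hbdd : ∀ᵐ y, ‖u y‖ ≤ 1 := ae_of_all _ fun y ↦ by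
    rw [Real.norm_eq_abs, abs_of_nonneg (hu0 y)]; exact hu1 y
  calc ∫ y, u y ∂(Measure.pi fun _ : ι ↦ gaussianReal m₂ v)
        - ∫ y, u y ∂(Measure.pi fun _ : ι ↦ gaussianReal m₁ v)
      = ∫ y, (q y - p y) * u y := by
        rw [integral_pi_gaussianReal _ hv, integral_pi_gaussianReal _ hv,
          ← integral_sub (hqi.mul_bdd hu.aestronglyMeasurable hbdd)
            (hpi.mul_bdd hu.aestronglyMeasurable hbdd)]
        simp_rw [sub_mul]
    _ ≤ (∫ y, |q y - p y|) / 2 := by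
        refine integral_mul_le_half_integral_abs (hqi.sub hpi) ?_ hu.aestronglyMeasurable hu0 hu1
        rw [integral_sub hqi hpi, integral_prod_gaussianPDFReal _ hv,
          integral_prod_gaussianPDFReal _ hv, sub_self]
    _ ≤ s := by
        have := integral_abs_sub_le_two_mul
          (fun y ↦ prod_nonneg fun i _ ↦ gaussianPDFReal_nonneg m₁ v (y i))
          (fun y ↦ prod_nonneg fun i _ ↦ gaussianPDFReal_nonneg m₂ v (y i)) hpi hqi
          (integral_prod_gaussianPDFReal _ hv) (integral_prod_gaussianPDFReal _ hv) hpq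
          (by positivity) hB
        linarith

end Gaussian

end ProbabilityTheory

section TwoPoint

variable {Ω : Type*} [MeasurableSpace Ω]

theorem add_mul_integral_le_integral {μ : Measure Ω} [IsProbabilityMeasure μ] {w h : Ω → ℝ}
    (hw : Integrable w μ) (hh : Integrable h μ) {c a : ℝ} (hle : ∀ y, c + a * w y ≤ h y) :
    c + a * ∫ y, w y ∂μ ≤ ∫ y, h y ∂μ := by
  have hi : Integrable (fun y ↦ c + a * w y) μ := (integrable_const c).add (hw.const_mul a)
  have := integral_mono hi hh hle
  rwa [integral_add (integrable_const c) (hw.const_mul a), integral_const, probReal_univ,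
    one_smul, integral_const_mul] at this

theorem le_half_integral_add_half_integral {P Q : Measure Ω} [IsProbabilityMeasure P]
    [IsProbabilityMeasure Q] {δ : ℝ}
    (htv : ∀ u : Ω → ℝ, Measurable u → (∀ y, 0 ≤ u y) → (∀ y, u y ≤ 1) →
      ∫ y, u y ∂Q - ∫ y, u y ∂P ≤ δ)
    {f g : Ω → ℝ} (hfm : Measurable f) (hf : Integrable f P) (hg : Integrable g Q) {c₀ c₁ : ℝ}
    (hc : c₀ ≤ c₁) (hf₀ : ∀ y, c₀ ≤ f y) (hg₀ : ∀ y, c₀ ≤ g y) (hfg : ∀ y, 2 * c₁ ≤ f y + g y) :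
    c₀ + max (1 - δ) 0 * (c₁ - c₀) ≤ 1 / 2 * ∫ y, f y ∂P + 1 / 2 * ∫ y, g y ∂Q := by
  set a := 2 * (c₁ - c₀)
  have ha : 0 ≤ a := by simp only [a]; linarith
  set u : Ω → ℝ := fun y ↦ min ((f y - c₀) / a) 1
  have hum : Measurable u := ((hfm.sub_const c₀).div_const a).min measurable_const
  have hu0 : ∀ y, 0 ≤ u y := fun y ↦ le_min (div_nonneg (by linarith [hf₀ y]) ha) zero_le_one
  have hu1 : ∀ y, u y ≤ 1 := fun y ↦ min_le_right _ _
  have hau : ∀ y, a * u y = min (f y - c₀) a := by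
    intro y
    rcases ha.eq_or_lt with ha0 | ha0
    · rw [← ha0, zero_mul, min_eq_right (by linarith [hf₀ y])]
    · rw [mul_min_of_nonneg _ _ ha, mul_div_cancel₀ _ ha0.ne', mul_one]
  have hfu : ∀ y, c₀ + a * u y ≤ f y := fun y ↦ by linarith [hau y, min_le_left (f y - c₀) a]
  -- where `f` is small, `f + g ≥ 2 c₁` forces `g` to be large
  have hgu : ∀ y, (c₀ + a) + (-a) * u y ≤ g y := by
    intro y
    rcases min_cases (f y - c₀) a with ⟨h, -⟩ | ⟨h, -⟩ <;> linarith [hau y, hfg y, hg₀ y]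
  have hui : ∀ μ : Measure Ω, [IsProbabilityMeasure μ] → Integrable u μ := fun μ _ ↦
    .of_bound hum.aestronglyMeasurable 1 (ae_of_all _ fun y ↦ by
      rw [Real.norm_eq_abs, abs_of_nonneg (hu0 y)]; exact hu1 y)
  have hIf := add_mul_integral_le_integral (hui P) hf hfu
  have hIg := add_mul_integral_le_integral (hui Q) hg hgu
  have hIP : 0 ≤ ∫ y, u y ∂P := integral_nonneg hu0
  have hIQ : ∫ y, u y ∂Q ≤ 1 := by
    simpa using integral_mono (hui Q) (integrable_const 1) hu1
  have hb : max (1 - δ) 0 ≤ 1 + ∫ y, u y ∂P - ∫ y, u y ∂Q :=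
    max_le (by linarith [htv u hum hu0 hu1]) (by linarith)
  nlinarith [mul_le_mul_of_nonneg_left hb ha]

/-- The left side is `𝔼 (X - t)₊` for `X = Δ` with probability `(1 - δ)₊` and `X = 0` otherwise. -/
theorem le_half_integral_max_sub_add_half_integral_max_sub {P Q : Measure Ω}
    [IsProbabilityMeasure P] [IsProbabilityMeasure Q] {δ : ℝ}
    (htv : ∀ u : Ω → ℝ, Measurable u → (∀ y, 0 ≤ u y) → (∀ y, u y ≤ 1) →
      ∫ y, u y ∂Q - ∫ y, u y ∂P ≤ δ)
    {L₁ L₂ : Ω → ℝ} (hm₁ : Measurable L₁) (hm₂ : Measurable L₂) {Δ M : ℝ} (hΔ : 0 ≤ Δ)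
    (h₁ : ∀ y, 0 ≤ L₁ y ∧ L₁ y ≤ M) (h₂ : ∀ y, 0 ≤ L₂ y ∧ L₂ y ≤ M)
    (hsum : ∀ y, 2 * Δ ≤ L₁ y + L₂ y) (t : ℝ) :
    max (-t) 0 + max (1 - δ) 0 * (max (Δ - t) 0 - max (-t) 0)
      ≤ 1 / 2 * ∫ y, max (L₁ y - t) 0 ∂P + 1 / 2 * ∫ y, max (L₂ y - t) 0 ∂Q := by
  have hint : ∀ (μ : Measure Ω) [IsProbabilityMeasure μ] (L : Ω → ℝ), Measurable L →
      (∀ y, 0 ≤ L y ∧ L y ≤ M) → Integrable (fun y ↦ max (L y - t) 0) μ :=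
    fun μ _ L hm hL ↦ .of_bound (by fun_prop) (max (M - t) 0) (ae_of_all _ fun y ↦ by
      rw [Real.norm_eq_abs, abs_of_nonneg (le_max_right _ _)]
      exact max_le_max (by linarith [(hL y).2]) le_rfl)
  refine le_half_integral_add_half_integral htv (by fun_prop) (hint P L₁ hm₁ h₁)
    (hint Q L₂ hm₂ h₂) (max_le_max (by linarith) le_rfl)
    (fun y ↦ max_le_max (by linarith [(h₁ y).1]) le_rfl)
    (fun y ↦ max_le_max (by linarith [(h₂ y).1]) le_rfl) fun y ↦ ?_
  rcases le_total Δ t with ht | ht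
  · rw [max_eq_right (by linarith)]
    linarith [le_max_right (L₁ y - t) 0, le_max_right (L₂ y - t) 0]
  · rw [max_eq_left (by linarith)]
    linarith [le_max_left (L₁ y - t) 0, le_max_left (L₂ y - t) 0, hsum y]

end TwoPoint

theorem two_mul_le_min_abs_sub_add_min_abs_add {Δ : ℝ} (hΔ : 0 ≤ Δ) (x : ℝ) :
    2 * Δ ≤ min |x - Δ| (2 * Δ) + min |x + Δ| (2 * Δ) := by
  rcases min_cases |x - Δ| (2 * Δ) with ⟨h₁, -⟩ | ⟨h₁, -⟩ <;>
  rcases min_cases |x + Δ| (2 * Δ) with ⟨h₂, -⟩ | ⟨h₂, -⟩ <;>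
  linarith [le_abs_self (x + Δ), neg_le_abs (x - Δ), abs_nonneg (x + Δ), abs_nonneg (x - Δ)]

/-- With `e = 1 / (1 - α)`, the right side is the CVaR objective at `t` of the two-point law
`X = Δ` with probability `b`, `X = 0` otherwise. -/
theorem mul_min_le_twoPoint_cvar_objective {Δ b e : ℝ} (hΔ : 0 ≤ Δ) (he : 1 ≤ e) (t : ℝ) :
    Δ * min 1 (b * e) ≤ t + e * (max (-t) 0 + b * (max (Δ - t) 0 - max (-t) 0)) := by
  have h1 : Δ * min 1 (b * e) ≤ Δ := mul_le_of_le_one_right hΔ (min_le_left _ _)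
  have hbe : Δ * min 1 (b * e) ≤ Δ * (b * e) := mul_le_mul_of_nonneg_left (min_le_right _ _) hΔ
  rcases le_total t 0 with ht | ht
  · rw [max_eq_left (by linarith), max_eq_left (by linarith)]
    nlinarith
  rcases le_total t Δ with htΔ | htΔ
  · rw [max_eq_right (by linarith), max_eq_left (by linarith)]
    rcases le_total (b * e) 1 with hbe1 | hbe1 <;> nlinarith
  · rw [max_eq_right (by linarith), max_eq_right (by linarith)]
    nlinarith

theorem two_mul_Psi_le {α ρ : ℝ} (hα0 : 0 ≤ α) (hα1 : α < 1) (hρ : 0 ≤ ρ) :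
    2 * Psi α ρ ≤ min 1 (max (1 - ρ / 2) 0 * (1 / (1 - α))) := by
  have h1α : 0 < 1 - α := by linarith
  have he : 1 ≤ 1 / (1 - α) := by rw [le_div_iff₀ h1α]; linarith
  have hb : 1 - ρ / 2 ≤ max (1 - ρ / 2) 0 := le_max_left _ _
  unfold Psi
  split_ifs with hα hρα hρ1
  · subst hα
    have hm : max (1 - ρ) 0 ≤ 1 := max_le (by linarith) zero_le_one
    have hm2 : max (1 - ρ) 0 ^ 2 ≤ max (1 - ρ) 0 := by nlinarith [le_max_right (1 - ρ) 0]
    rw [sub_zero, div_one, mul_one, mul_div_cancel₀ _ two_ne_zero]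
    exact le_min (hm2.trans hm) (hm2.trans (max_le_max (by linarith) le_rfl))
  · have hα' : 0 < α := lt_of_le_of_ne hα0 (Ne.symm hα)
    have hAMGM : 2 * ρ ≤ α + ρ ^ 2 / α := by
      rw [← sub_nonneg, show α + ρ ^ 2 / α - 2 * ρ = (α - ρ) ^ 2 / α by field_simp; ring]
      positivity
    have hr : ρ ^ 2 / α * α = ρ ^ 2 := div_mul_cancel₀ _ hα'.ne'
    rw [show 2 * (1 / 2 - ρ ^ 2 / (2 * α)) = 1 - ρ ^ 2 / α by ring]
    refine le_min (by linarith [div_nonneg (sq_nonneg ρ) hα0]) ?_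
    rw [mul_one_div, le_div_iff₀ h1α]
    nlinarith [mul_nonneg hρ (by linarith : (0 : ℝ) ≤ 3 / 2 - ρ)]
  · rw [not_le] at hρα
    rw [show 2 * ((1 - ρ) ^ 2 / (2 * (1 - α))) = (1 - ρ) ^ 2 / (1 - α) by field_simp]
    refine le_min ?_ ?_
    · rw [div_le_one h1α]
      nlinarith
    · rw [mul_one_div, div_le_div_iff_of_pos_right h1α]
      nlinarith
  · exact le_min (by norm_num) (by simp only [mul_zero]; positivity)

theorem gaussian_mean_estimation_cvar
    (n : ℕ) (Δ : ℝ) (hΔ : 0 < Δ)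
    (θ : (Fin n → ℝ) → ℝ) (hθ : Measurable θ)
    (α : ℝ) (hα : α ∈ Set.Ico (0 : ℝ) 1) :
    (⨅ t : ℝ, t + (1 / (1 - α)) *
        ((1 / 2) * (∫ y, max (min |θ y - Δ| (2 * Δ) - t) 0
            ∂(Measure.pi fun _ : Fin n => gaussianReal Δ 1))
          + (1 / 2) * (∫ y, max (min |θ y + Δ| (2 * Δ) - t) 0
            ∂(Measure.pi fun _ : Fin n => gaussianReal (-Δ) 1)))) ≥
    2 * Δ * Psi α (2 * Real.sqrt n * Δ) := by
  obtain ⟨hα0, hα1⟩ := hα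
  have htv : ∀ u : (Fin n → ℝ) → ℝ, Measurable u → (∀ y, 0 ≤ u y) → (∀ y, u y ≤ 1) →
      ∫ y, u y ∂(Measure.pi fun _ : Fin n => gaussianReal (-Δ) 1)
        - ∫ y, u y ∂(Measure.pi fun _ : Fin n => gaussianReal Δ 1) ≤ √n * Δ := by
    intro u hu hu0 hu1
    convert integral_pi_gaussianReal_sub_le one_ne_zero hu hu0 hu1 using 1
    rw [Fintype.card_fin, sub_neg_eq_add, ← two_mul, abs_of_pos (by positivity), NNReal.coe_one,
      Real.sqrt_one]
    ring
  have hloss : ∀ z : ℝ, 0 ≤ min |z| (2 * Δ) ∧ min |z| (2 * Δ) ≤ 2 * Δ :=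
    fun z ↦ ⟨le_min (abs_nonneg z) (by positivity), min_le_right _ _⟩
  have he : 1 ≤ 1 / (1 - α) := by rw [le_div_iff₀ (by linarith)]; linarith
  refine le_ciInf fun t ↦ ?_
  calc 2 * Δ * Psi α (2 * √n * Δ)
      ≤ Δ * min 1 (max (1 - √n * Δ) 0 * (1 / (1 - α))) := by
        rw [mul_comm 2 Δ, mul_assoc]
        refine mul_le_mul_of_nonneg_left ?_ hΔ.le
        have h := two_mul_Psi_le hα0 hα1 (by positivity : 0 ≤ 2 * √n * Δ)
        rwa [mul_div_right_comm, mul_div_cancel_left₀ _ two_ne_zero] at h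
    _ ≤ _ := mul_min_le_twoPoint_cvar_objective hΔ.le he t
    _ ≤ _ := (add_le_add_iff_left t).mpr (mul_le_mul_of_nonneg_left
        (le_half_integral_max_sub_add_half_integral_max_sub htv (by fun_prop) (by fun_prop)
          hΔ.le (fun y ↦ hloss _) (fun y ↦ hloss _)
          (fun y ↦ two_mul_le_min_abs_sub_add_min_abs_add hΔ.le (θ y)) t) (by linarith))
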